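/- arXiv:2007.12456 — 2 statements merged into one kernel-verified Lean document; each statement's English description precedes it below -/
import Mathlib

section
/- Let E be a symmetric Dirichlet form on L²(X,m). Then for every u ∈ 𝔇 and c ≥ 0 one has E((−c)∨u∧c) ≤ E(u). If moreover E is quasilinear (dom E is a linear subspace), then for every u ∈ 𝔇 the truncations (−n)∨u∧n converge to u in the norm ‖·‖_𝔇 as n → ∞. -/
open scoped ENNReal
open MeasureTheory

noncomputable section

variable {X : Type*} [TopologicalSpace X] [MeasurableSpace X] [BorelSpace X]
variable {m : Measure X} [SigmaFinite m]

/-- Convexity for an `ℝ≥0∞`-valued functional on `L²(X,m)`. -/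
def IsConvexFunctional (E : Lp ℝ 2 m → ℝ≥0∞) : Prop :=
  ∀ u v : Lp ℝ 2 m, ∀ a b : ℝ, 0 ≤ a → 0 ≤ b → a + b = 1 →
    E (a • u + b • v) ≤ ENNReal.ofReal a * E u + ENNReal.ofReal b * E v

/-- The real function `s ↦ ½((s+α)₊ − (s−α)₋)` appearing in the second defining
inequality of Dirichlet forms. -/
def medTrunc (α s : ℝ) : ℝ :=
  (max (s + α) 0 - max (-(s - α)) 0) / 2

/-- Cipriani–Grillo: a (nonlinear) Dirichlet form is a convex, lower semicontinuous
functional `E : L²(X,m) → [0,∞]` with dense effective domain satisfying the two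
structural inequalities. The second one is stated for any `w ∈ L²` which is an a.e.
representative of `½((u−v+α)₊ − (u−v−α)₋)`. -/
def IsDirichletForm (E : Lp ℝ 2 m → ℝ≥0∞) : Prop :=
  IsConvexFunctional E ∧ LowerSemicontinuous E ∧ Dense {u : Lp ℝ 2 m | E u < ⊤} ∧
  (∀ u v : Lp ℝ 2 m, E (u ⊓ v) + E (u ⊔ v) ≤ E u + E v) ∧
  (∀ u v w : Lp ℝ 2 m, ∀ α : ℝ, 0 < α →
    (∀ᵐ x ∂m, w x = medTrunc α (u x - v x)) →
    E (v + w) + E (u - w) ≤ E u + E v)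

/-- `E` is symmetric: `E 0 = 0` and `E (-u) = E u`. -/
def IsSymmetricFunctional (E : Lp ℝ 2 m → ℝ≥0∞) : Prop :=
  E 0 = 0 ∧ ∀ u : Lp ℝ 2 m, E (-u) = E u

/-- `E₁ u = ‖u‖₂² + E u`. -/
def EOne (E : Lp ℝ 2 m → ℝ≥0∞) (u : Lp ℝ 2 m) : ℝ≥0∞ :=
  ENNReal.ofReal (‖u‖ ^ 2) + E u

/-- The Luxemburg-type norm `‖u‖_𝔇 = inf {λ > 0 | E₁(u/λ) ≤ 1}`, with `inf ∅ = ∞`. -/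
def Dnorm (E : Lp ℝ 2 m → ℝ≥0∞) (u : Lp ℝ 2 m) : ℝ≥0∞ :=
  sInf (ENNReal.ofReal '' {l : ℝ | 0 < l ∧ EOne E (l⁻¹ • u) ≤ 1})

/-- The Dirichlet space `𝔇 = {u ∈ L² | ‖u‖_𝔇 < ∞}`. -/
def Dspace (E : Lp ℝ 2 m → ℝ≥0∞) : Set (Lp ℝ 2 m) :=
  {u : Lp ℝ 2 m | Dnorm E u < ⊤}

/-- `E` is quasilinear: its effective domain is a linear subspace of `L²(X,m)`. -/
def IsQuasilinear (E : Lp ℝ 2 m → ℝ≥0∞) : Prop :=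
  ∃ S : Submodule ℝ (Lp ℝ 2 m), {u : Lp ℝ 2 m | E u < ⊤} = (S : Set (Lp ℝ 2 m))

/-! Truncation `T_c u = (-c) ∨ u ∧ c` comes out of the second Dirichlet inequality in two ways.
For the pair `(u, -u)` at level `2c` it reads `2 E(T_c u) ≤ 2 E(u)`. For the pair `(u, 0)` at
level `c` it reads `E(½(u + T_c u)) + E(½(u - T_c u)) ≤ E(u)`; as `T_n u → u` in `L²` by
dominated convergence, lower semicontinuity of `E` at `u` forces `E(½(u - T_n u)) → 0` whenever
`E(u) < ∞`. Quasilinearity gives every multiple of `u ∈ 𝔇` finite energy, so this applies to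
`2t • u` for each `t > 0` and yields `E₁(t • (T_n u - u)) → 0`, which is convergence in the
Luxemburg norm `‖·‖_𝔇`. -/

open Filter Topology

section RealTruncation

variable {c s : ℝ}

theorem medTrunc_two_mul (hc : 0 ≤ c) : medTrunc (2 * c) (2 * s) = min (max s (-c)) c + s := by
  simp only [medTrunc, min_def, max_def]
  split_ifs <;> linarith

theorem medTrunc_eq_half_add (hc : 0 ≤ c) : medTrunc c s = (s + min (max s (-c)) c) / 2 := by
  simp only [medTrunc, min_def, max_def]
  split_ifs <;> linarith

theorem min_max_mul_of_nonneg {t : ℝ} (ht : 0 ≤ t) :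
    min (max (t * s) (-(t * c))) (t * c) = t * min (max s (-c)) c := by
  rw [← mul_neg, ← mul_max_of_nonneg _ _ ht, ← mul_min_of_nonneg _ _ ht]

theorem abs_min_max_sub_le (hc : 0 ≤ c) : |min (max s (-c)) c - s| ≤ |s| := by
  rw [abs_le]
  rcases abs_cases s with ⟨hs, _⟩ | ⟨hs, _⟩ <;> rw [hs] <;> constructor <;>
    simp only [min_def, max_def] <;> split_ifs <;> linarith

theorem eventually_min_max_eq (s : ℝ) :
    ∀ᶠ c in atTop, min (max s (-c)) c = s := by
  filter_upwards [eventually_ge_atTop |s|] with c hc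
  rw [abs_le'] at hc
  rw [max_eq_left (by linarith), min_eq_left hc.1]

end RealTruncation

theorem ENNReal.tendsto_zero_of_add_le_of_lowerSemicontinuousAt {Y ι : Type*}
    [TopologicalSpace Y] {l : Filter ι} {f : Y → ℝ≥0∞} {y : Y} {x : ι → Y} {g : ι → ℝ≥0∞}
    (hf : LowerSemicontinuousAt f y) (hy : f y ≠ ⊤) (hx : Tendsto x l (𝓝 y))
    (hle : ∀ᶠ i in l, f (x i) + g i ≤ f y) : Tendsto g l (𝓝 0) := by
  refine ENNReal.tendsto_nhds_zero.2 fun ε hε => ?_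
  rcases le_or_gt (f y) ε with hfε | hεf
  · filter_upwards [hle] with i hi
    exact (le_add_self.trans hi).trans hfε
  · have hlt : f y - ε < f y := ENNReal.sub_lt_self hy (hε.trans hεf).ne' hε.ne'
    filter_upwards [hx.eventually (hf _ hlt), hle] with i hfi hi
    by_contra! hgi
    have : f y < f (x i) + g i :=
      calc f y = (f y - ε) + ε := (tsub_add_cancel_of_le hεf.le).symm
        _ < f (x i) + g i := ENNReal.add_lt_add hfi hgi
    exact this.not_ge hi

section LpEnergy

variable {α : Type*} [MeasurableSpace α] {μ : Measure α} {p : ℝ≥0∞}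

theorem MeasureTheory.Lp.tendsto_of_tendsto_ae_of_dominated {F : Type*} [NormedAddCommGroup F]
    [Fact (1 ≤ p)] (hp : p ≠ ⊤) {f : ℕ → Lp F p μ} {g : Lp F p μ} {bound : α → ℝ}
    (hbound : MemLp bound p μ)
    (h_bound : ∀ n, ∀ᵐ x ∂μ, ‖f n x - g x‖ ≤ bound x)
    (h_lim : ∀ᵐ x ∂μ, Tendsto (fun n => f n x) atTop (𝓝 (g x))) :
    Tendsto f atTop (𝓝 g) := by
  have hp0 : p ≠ 0 := (zero_lt_one.trans_le Fact.out).ne'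
  have hp_pos : 0 < p.toReal := ENNReal.toReal_pos hp0 hp
  rw [Lp.tendsto_Lp_iff_tendsto_eLpNorm']
  simp only [eLpNorm_eq_lintegral_rpow_enorm_toReal hp0 hp]
  have hint :
      Tendsto (fun n => ∫⁻ x, ‖(⇑(f n) - ⇑g) x‖ₑ ^ p.toReal ∂μ) atTop (𝓝 0) := by
    have := tendsto_lintegral_of_dominated_convergence' (f := 0)
      (fun x => ‖bound x‖ₑ ^ p.toReal)
      (fun n => ((Lp.aestronglyMeasurable (f n)).sub
        (Lp.aestronglyMeasurable g)).enorm.pow_const _)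
      (fun n => (h_bound n).mono fun x hx => ENNReal.rpow_le_rpow
        (enorm_le_iff_norm_le.2 (hx.trans (Real.le_norm_self _))) hp_pos.le)
      (lintegral_rpow_enorm_lt_top_of_eLpNorm_lt_top hp0 hp hbound.2).ne
      (h_lim.mono fun x hx => ?_)
    · simpa using this
    · simpa [Function.comp_def, ENNReal.zero_rpow_of_pos hp_pos] using
        ((ENNReal.continuous_rpow_const (y := p.toReal)).tendsto _).comp
          (hx.sub_const (g x)).enorm
  simpa [Function.comp_def, ENNReal.zero_rpow_of_pos (inv_pos.2 hp_pos)] using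
    ((ENNReal.continuous_rpow_const (y := p.toReal⁻¹)).tendsto 0).comp hint

theorem MeasureTheory.Lp.tendsto_of_ae_eq_trunc [Fact (1 ≤ p)] (hp : p ≠ ⊤) {u : Lp ℝ p μ}
    {w : ℕ → Lp ℝ p μ} {c : ℕ → ℝ} (hc : Tendsto c atTop atTop) (hc0 : ∀ n, 0 ≤ c n)
    (hw : ∀ n, ∀ᵐ x ∂μ, w n x = min (max (u x) (-c n)) (c n)) :
    Tendsto w atTop (𝓝 u) := by
  refine Lp.tendsto_of_tendsto_ae_of_dominated hp (Lp.memLp u).norm (fun n => ?_) ?_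
  · filter_upwards [hw n] with x hx
    rw [hx, Real.norm_eq_abs, Real.norm_eq_abs]
    exact abs_min_max_sub_le (hc0 n)
  · filter_upwards [ae_all_iff.2 hw] with x hx
    refine tendsto_const_nhds.congr' ?_
    filter_upwards [hc.eventually (eventually_min_max_eq (u x))] with n hn
    rw [hx n, hn]

theorem MeasureTheory.Lp.ae_smul_eq_trunc {u w : Lp ℝ p μ} {c t : ℝ} (ht : 0 ≤ t)
    (hw : ∀ᵐ x ∂μ, w x = min (max (u x) (-c)) c) :
    ∀ᵐ x ∂μ, (t • w) x = min (max ((t • u) x) (-(t * c))) (t * c) := by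
  filter_upwards [hw, Lp.coeFn_smul t w, Lp.coeFn_smul t u] with x hx hwx hux
  rw [hwx, hux, Pi.smul_apply, Pi.smul_apply, smul_eq_mul, smul_eq_mul, hx,
    min_max_mul_of_nonneg ht]

variable {E : Lp ℝ 2 μ → ℝ≥0∞}

theorem IsDirichletForm.le_of_ae_eq_trunc (hE : IsDirichletForm E)
    (hsym : IsSymmetricFunctional E) {u w : Lp ℝ 2 μ} {c : ℝ} (hc : 0 ≤ c)
    (hw : ∀ᵐ x ∂μ, w x = min (max (u x) (-c)) c) : E w ≤ E u := by
  rcases hc.eq_or_lt with rfl | hc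
  · have hw0 : w = 0 := by
      refine Lp.ext ?_
      filter_upwards [hw, Lp.coeFn_zero ℝ 2 μ] with x hx h0
      rw [hx, h0, Pi.zero_apply, neg_zero, min_eq_right (le_max_right _ _)]
    rw [hw0, hsym.1]
    exact zero_le
  -- `(u, -u)` at level `2c` in the second Dirichlet inequality gives `2 E w ≤ 2 E u`.
  have key := hE.2.2.2.2 u (-u) (w + u) (2 * c) (by positivity) (by
    filter_upwards [hw, Lp.coeFn_add w u, Lp.coeFn_neg u] with x hx hadd hneg
    rw [hadd, hneg, Pi.add_apply, Pi.neg_apply, hx, sub_neg_eq_add, ← two_mul,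
      medTrunc_two_mul hc.le])
  rw [show -u + (w + u) = w by abel, show u - (w + u) = -w by abel, hsym.2, hsym.2] at key
  by_contra! h
  exact (ENNReal.add_lt_add h h).not_ge key

theorem IsDirichletForm.half_add_add_half_sub_le_of_trunc (hE : IsDirichletForm E)
    (hsym : IsSymmetricFunctional E) {u w : Lp ℝ 2 μ} {c : ℝ} (hc : 0 < c)
    (hw : ∀ᵐ x ∂μ, w x = min (max (u x) (-c)) c) :
    E ((2 : ℝ)⁻¹ • (u + w)) + E ((2 : ℝ)⁻¹ • (u - w)) ≤ E u := by
  have key := hE.2.2.2.2 u 0 ((2 : ℝ)⁻¹ • (u + w)) c hc (by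
    filter_upwards [hw, Lp.coeFn_smul (2 : ℝ)⁻¹ (u + w), Lp.coeFn_add u w,
      Lp.coeFn_zero ℝ 2 μ] with x hx hsmul hadd h0
    rw [hsmul, Pi.smul_apply, hadd, Pi.add_apply, hx, h0, Pi.zero_apply, sub_zero,
      medTrunc_eq_half_add hc.le, smul_eq_mul]
    ring)
  rwa [zero_add, hsym.1, add_zero,
    show u - (2 : ℝ)⁻¹ • (u + w) = (2 : ℝ)⁻¹ • (u - w) by module] at key

theorem IsDirichletForm.tendsto_half_sub_trunc (hE : IsDirichletForm E)
    (hsym : IsSymmetricFunctional E) {u : Lp ℝ 2 μ} (hu : E u ≠ ⊤) {w : ℕ → Lp ℝ 2 μ}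
    {c : ℕ → ℝ} (hc : Tendsto c atTop atTop) (hc0 : ∀ n, 0 ≤ c n)
    (hw : ∀ n, ∀ᵐ x ∂μ, w n x = min (max (u x) (-c n)) (c n)) :
    Tendsto (fun n => E ((2 : ℝ)⁻¹ • (u - w n))) atTop (𝓝 0) := by
  have hwu := Lp.tendsto_of_ae_eq_trunc ENNReal.ofNat_ne_top hc hc0 hw
  have hmid : Tendsto (fun n => (2 : ℝ)⁻¹ • (u + w n)) atTop (𝓝 u) := by
    have := (tendsto_const_nhds (x := u).add hwu).const_smul (2 : ℝ)⁻¹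
    rwa [show (2 : ℝ)⁻¹ • (u + u) = u by module] at this
  exact ENNReal.tendsto_zero_of_add_le_of_lowerSemicontinuousAt (hE.2.1 u) hu hmid
    ((hc.eventually_gt_atTop 0).mono fun n hn =>
      hE.half_add_add_half_sub_le_of_trunc hsym hn (hw n))

theorem exists_EOne_le_one_of_mem_Dspace {u : Lp ℝ 2 μ} (hu : u ∈ Dspace E) :
    ∃ l : ℝ, 0 < l ∧ EOne E (l⁻¹ • u) ≤ 1 := by
  rw [Dspace, Set.mem_ofPred_eq, Dnorm, sInf_lt_iff] at hu
  obtain ⟨-, ⟨l, hl, -⟩, -⟩ := hu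
  exact ⟨l, hl⟩

theorem IsQuasilinear.smul_lt_top (hq : IsQuasilinear E) {u : Lp ℝ 2 μ} (hu : u ∈ Dspace E)
    (t : ℝ) : E (t • u) < ⊤ := by
  obtain ⟨S, hS⟩ := hq
  obtain ⟨l, hl, hEl⟩ := exists_EOne_le_one_of_mem_Dspace hu
  have hmem : l⁻¹ • u ∈ S := by
    rw [← SetLike.mem_coe, ← hS]
    exact (le_add_self.trans hEl).trans_lt ENNReal.one_lt_top
  have : t • u ∈ S := by
    simpa [smul_smul, mul_assoc, hl.ne'] using S.smul_mem (t * l) hmem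
  rwa [← SetLike.mem_coe, ← hS] at this

theorem Dnorm_le_ofReal {u : Lp ℝ 2 μ} {l : ℝ} (hl : 0 < l) (h : EOne E (l⁻¹ • u) ≤ 1) :
    Dnorm E u ≤ ENNReal.ofReal l :=
  sInf_le ⟨l, ⟨hl, h⟩, rfl⟩

theorem tendsto_Dnorm_zero_of_tendsto_EOne {ι : Type*} {l : Filter ι} {z : ι → Lp ℝ 2 μ}
    (h : ∀ t : ℝ, 0 < t → Tendsto (fun i => EOne E (t • z i)) l (𝓝 0)) :
    Tendsto (fun i => Dnorm E (z i)) l (𝓝 0) := by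
  refine ENNReal.tendsto_nhds_zero.2 fun ε hε => ?_
  rcases eq_or_ne ε ⊤ with rfl | hεtop
  · exact Eventually.of_forall fun _ => le_top
  have hε' : 0 < ε.toReal := ENNReal.toReal_pos hε.ne' hεtop
  filter_upwards [(h _ (inv_pos.2 hε')).eventually_lt_const zero_lt_one] with i hi
  exact (Dnorm_le_ofReal hε' hi.le).trans_eq (ENNReal.ofReal_toReal hεtop)

theorem tendsto_EOne_zero {ι : Type*} {l : Filter ι} {z : ι → Lp ℝ 2 μ}
    (hz : Tendsto z l (𝓝 0)) (hEz : Tendsto (fun i => E (z i)) l (𝓝 0)) :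
    Tendsto (fun i => EOne E (z i)) l (𝓝 0) := by
  have hnorm : Tendsto (fun i => ENNReal.ofReal (‖z i‖ ^ 2)) l (𝓝 0) := by
    simpa using ENNReal.tendsto_ofReal ((tendsto_norm_zero.comp hz).pow 2)
  simpa [EOne] using hnorm.add hEz

end LpEnergy

theorem truncation_le_and_tendsto_general
    (E : Lp ℝ 2 m → ℝ≥0∞) (hE : IsDirichletForm E) (hsym : IsSymmetricFunctional E) :
    (∀ u ∈ Dspace E, ∀ c : ℝ, 0 ≤ c → ∀ w : Lp ℝ 2 m,
      (∀ᵐ x ∂m, w x = min (max (u x) (-c)) c) → E w ≤ E u) ∧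
    (IsQuasilinear E →
      ∀ u ∈ Dspace E, ∀ w : ℕ → Lp ℝ 2 m,
        (∀ n : ℕ, ∀ᵐ x ∂m, w n x = min (max (u x) (-(n : ℝ))) (n : ℝ)) →
        Filter.Tendsto (fun n => Dnorm E (w n - u)) Filter.atTop (nhds 0)) := by
  refine ⟨fun u _ c hc w hw => hE.le_of_ae_eq_trunc hsym hc hw, fun hq u hu w hw => ?_⟩
  have hwu : Tendsto w atTop (𝓝 u) := Lp.tendsto_of_ae_eq_trunc ENNReal.ofNat_ne_top
    tendsto_natCast_atTop_atTop (fun n => n.cast_nonneg) hw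
  refine tendsto_Dnorm_zero_of_tendsto_EOne fun t ht => tendsto_EOne_zero ?_ ?_
  · simpa using (hwu.sub_const u).const_smul t
  -- `t • (w n - u)` is, up to sign, half the gap between `2t • u` and its truncation at `2tn`.
  have hlevels : Tendsto (fun n : ℕ => 2 * t * n) atTop atTop :=
    tendsto_natCast_atTop_atTop.const_mul_atTop (by positivity)
  refine (hE.tendsto_half_sub_trunc hsym (hq.smul_lt_top hu (2 * t)).ne hlevels
    (fun n => by positivity) (fun n => Lp.ae_smul_eq_trunc (by positivity) (hw n))).congr
    fun n => ?_
  rw [← hsym.2]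
  congr 1
  module

/-- For a symmetric Dirichlet form, `E((−c) ∨ u ∧ c) ≤ E(u)` for `u ∈ 𝔇` and `c ≥ 0`
(here `w` is any a.e. representative of the truncation `min (max u (−c)) c`); if `E` is
moreover quasilinear, the truncations `(−n) ∨ u ∧ n` converge to `u` in `‖·‖_𝔇`. -/
theorem truncation_le_and_tendsto
    (hsupp : ∀ U : Set X, IsOpen U → U.Nonempty → 0 < m U)
    (E : Lp ℝ 2 m → ℝ≥0∞) (hE : IsDirichletForm E) (hsym : IsSymmetricFunctional E) :
    (∀ u ∈ Dspace E, ∀ c : ℝ, 0 ≤ c → ∀ w : Lp ℝ 2 m,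
      (∀ᵐ x ∂m, w x = min (max (u x) (-c)) c) → E w ≤ E u) ∧
    (IsQuasilinear E →
      ∀ u ∈ Dspace E, ∀ w : ℕ → Lp ℝ 2 m,
        (∀ n : ℕ, ∀ᵐ x ∂m, w n x = min (max (u x) (-(n : ℝ))) (n : ℝ)) →
        Filter.Tendsto (fun n => Dnorm E (w n - u)) Filter.atTop (nhds 0)) :=
  truncation_le_and_tendsto_general E hE hsym

end
end

section
/- Let E be a symmetric Dirichlet form on L²(X,m) with associated norm-capacity cap and energy space 𝔇. Let f ∈ 𝔇 admit a quasicontinuous representative, again denoted f, and let λ > 0. Then cap({x ∈ X : |f(x)| > λ}) ≤ λ⁻¹ ‖f‖_𝔇. -/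
open scoped ENNReal
open MeasureTheory

noncomputable section

variable {X : Type*} [TopologicalSpace X] [MeasurableSpace X] [BorelSpace X]
variable {m : Measure X} [SigmaFinite m]

/-- The norm-capacity: `cap A = inf {‖u‖_𝔇 | u ≥ 1 a.e. on an open set U ⊇ A}`
(with `inf ∅ = ∞`). -/
def cap (E : Lp ℝ 2 m → ℝ≥0∞) (A : Set X) : ℝ≥0∞ :=
  sInf (Dnorm E '' {u : Lp ℝ 2 m |
    ∃ U : Set X, IsOpen U ∧ A ⊆ U ∧ ∀ᵐ x ∂m, x ∈ U → 1 ≤ u x})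

/-- `f : X → ℝ` is quasicontinuous: for every `ε > 0` there is an open set `O` with
`cap O ≤ ε` such that the restriction of `f` to `Oᶜ` is continuous. -/
def Quasicontinuous (E : Lp ℝ 2 m → ℝ≥0∞) (f : X → ℝ) : Prop :=
  ∀ ε : ℝ, 0 < ε → ∃ O : Set X, IsOpen O ∧ cap E O ≤ ENNReal.ofReal ε ∧ ContinuousOn f Oᶜ

/-!
Take an open set `O` of small capacity off which `f` is continuous. Then `{|f| > λ} \ O` is
relatively open in `Oᶜ`, i.e. `{|f| > λ} ⊆ W ∪ O` for an open `W` with `W \ O ⊆ {|f| > λ}`.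
Hence, if `u ≥ 1` a.e. on an open `U ⊇ O`, the function `λ⁻¹|f| + |u|` is `≥ 1` a.e. on the
open set `W ∪ U ⊇ {|f| > λ}`. The Luxemburg norm `‖·‖_𝔇` is subadditive and positively
homogeneous because `E₁` is convex, and `‖|u|‖_𝔇 ≤ ‖u‖_𝔇` because the lattice inequality for
`u` and `-u` together with symmetry gives `E |u| ≤ E u`. So
`cap {|f| > λ} ≤ λ⁻¹ ‖f‖_𝔇 + cap O`, and `cap O` is arbitrarily small.
-/

lemma apply_abs_le {M : Type*} [Lattice M] [AddCommGroup M] [IsOrderedAddMonoid M]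
    {E : M → ℝ≥0∞} (hlat : ∀ u v : M, E (u ⊓ v) + E (u ⊔ v) ≤ E u + E v)
    (hneg : ∀ u : M, E (-u) = E u) (u : M) : E |u| ≤ E u := by
  have hinf : u ⊓ -u = -|u| := by rw [← neg_neg (u ⊓ -u), neg_inf, neg_neg, sup_comm]; rfl
  have h := hlat u (-u)
  rw [hinf, show u ⊔ -u = |u| from rfl, hneg, hneg, ← two_mul, ← two_mul] at h
  exact (ENNReal.mul_le_mul_iff_right two_ne_zero ENNReal.ofNat_ne_top).mp h

section

variable {α : Type*} [MeasurableSpace α] {μ : Measure α}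

namespace MeasureTheory.Lp

lemma abs_smul_of_nonneg {p : ℝ≥0∞} {c : ℝ} (hc : 0 ≤ c) (u : Lp ℝ p μ) :
    |c • u| = c • |u| := by
  apply Lp.ext
  filter_upwards [Lp.coeFn_abs (c • u), Lp.coeFn_smul c u, Lp.coeFn_abs u,
    Lp.coeFn_smul c |u|] with x h1 h2 h3 h4
  simp only [h1, h2, h3, h4, Pi.smul_apply, smul_eq_mul, abs_mul, abs_of_nonneg hc]

end MeasureTheory.Lp

section DirichletNorm

variable {E : Lp ℝ 2 μ → ℝ≥0∞}

lemma IsConvexFunctional.eOne (hE : IsConvexFunctional E) : IsConvexFunctional (EOne E) := by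
  intro u v a b ha hb hab
  have hnorm : ‖a • u + b • v‖ ^ 2 ≤ a * ‖u‖ ^ 2 + b * ‖v‖ ^ 2 := by
    have htri : ‖a • u + b • v‖ ≤ a * ‖u‖ + b * ‖v‖ := by
      simpa [norm_smul, abs_of_nonneg ha, abs_of_nonneg hb] using norm_add_le (a • u) (b • v)
    nlinarith [norm_nonneg (a • u + b • v), sq_nonneg (‖u‖ - ‖v‖), mul_nonneg ha hb]
  calc EOne E (a • u + b • v)
      ≤ ENNReal.ofReal (a * ‖u‖ ^ 2 + b * ‖v‖ ^ 2)
        + (ENNReal.ofReal a * E u + ENNReal.ofReal b * E v) :=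
        add_le_add (ENNReal.ofReal_le_ofReal hnorm) (hE u v a b ha hb hab)
    _ = ENNReal.ofReal a * EOne E u + ENNReal.ofReal b * EOne E v := by
        rw [ENNReal.ofReal_add (by positivity) (by positivity),
          ENNReal.ofReal_mul ha, ENNReal.ofReal_mul hb, EOne, EOne]
        ring

lemma Dnorm_eq_iInf (E : Lp ℝ 2 μ → ℝ≥0∞) (u : Lp ℝ 2 μ) :
    Dnorm E u = ⨅ (t : ℝ) (_ : 0 < t ∧ EOne E (t⁻¹ • u) ≤ 1), ENNReal.ofReal t :=
  sInf_image

lemma Dnorm_le {u : Lp ℝ 2 μ} {t : ℝ} (ht : 0 < t) (hu : EOne E (t⁻¹ • u) ≤ 1) :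
    Dnorm E u ≤ ENNReal.ofReal t :=
  sInf_le ⟨t, ⟨ht, hu⟩, rfl⟩

lemma EOne_inv_smul_add_le_one (hE : IsConvexFunctional E) {x y : Lp ℝ 2 μ} {a b : ℝ}
    (ha : 0 < a) (hb : 0 < b) (hx : EOne E (a⁻¹ • x) ≤ 1) (hy : EOne E (b⁻¹ • y) ≤ 1) :
    EOne E ((a + b)⁻¹ • (x + y)) ≤ 1 := by
  have hsum : a / (a + b) + b / (a + b) = 1 := by field_simp
  have hxy : (a + b)⁻¹ • (x + y) = (a / (a + b)) • (a⁻¹ • x) + (b / (a + b)) • (b⁻¹ • y) := by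
    rw [smul_smul, smul_smul, smul_add]
    congr 2 <;> field_simp
  calc EOne E ((a + b)⁻¹ • (x + y))
      ≤ ENNReal.ofReal (a / (a + b)) * EOne E (a⁻¹ • x)
        + ENNReal.ofReal (b / (a + b)) * EOne E (b⁻¹ • y) := by
        rw [hxy]
        exact hE.eOne _ _ _ _ (by positivity) (by positivity) hsum
    _ ≤ ENNReal.ofReal (a / (a + b)) * 1 + ENNReal.ofReal (b / (a + b)) * 1 := by gcongr
    _ = 1 := by
        rw [mul_one, mul_one, ← ENNReal.ofReal_add (by positivity) (by positivity), hsum,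
          ENNReal.ofReal_one]

lemma Dnorm_add_le (hE : IsConvexFunctional E) (x y : Lp ℝ 2 μ) :
    Dnorm E (x + y) ≤ Dnorm E x + Dnorm E y := by
  rw [Dnorm_eq_iInf E x, Dnorm_eq_iInf E y]
  simp only [ENNReal.iInf_add, ENNReal.add_iInf, le_iInf_iff]
  rintro s ⟨hs, hy⟩ t ⟨ht, hx⟩
  rw [← ENNReal.ofReal_add ht.le hs.le]
  exact Dnorm_le (add_pos ht hs) (EOne_inv_smul_add_le_one hE ht hs hx hy)

lemma Dnorm_smul_le {c : ℝ} (hc : 0 < c) (u : Lp ℝ 2 μ) :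
    Dnorm E (c • u) ≤ ENNReal.ofReal c * Dnorm E u := by
  rw [Dnorm_eq_iInf E u]
  simp only [ENNReal.mul_iInf_of_ne (ENNReal.ofReal_pos.mpr hc).ne' ENNReal.ofReal_ne_top,
    le_iInf_iff]
  rintro t ⟨ht, hu⟩
  rw [← ENNReal.ofReal_mul hc.le]
  refine Dnorm_le (mul_pos hc ht) ?_
  rwa [smul_smul, mul_inv_rev, mul_assoc, inv_mul_cancel₀ hc.ne', mul_one]

lemma Dnorm_abs_le (hlat : ∀ u v : Lp ℝ 2 μ, E (u ⊓ v) + E (u ⊔ v) ≤ E u + E v)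
    (hneg : ∀ u : Lp ℝ 2 μ, E (-u) = E u) (u : Lp ℝ 2 μ) : Dnorm E |u| ≤ Dnorm E u := by
  refine sInf_le_sInf (Set.image_mono ?_)
  rintro t ⟨ht, hu⟩
  refine ⟨ht, le_trans ?_ hu⟩
  rw [← Lp.abs_smul_of_nonneg (inv_nonneg.mpr ht.le), EOne, EOne, norm_abs_eq_norm]
  exact add_le_add_right (apply_abs_le hlat hneg _) _

end DirichletNorm

section Capacity

variable [TopologicalSpace α] {E : Lp ℝ 2 μ → ℝ≥0∞}

lemma cap_le_Dnorm {A U : Set α} {u : Lp ℝ 2 μ} (hU : IsOpen U) (hAU : A ⊆ U)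
    (hu : ∀ᵐ x ∂μ, x ∈ U → 1 ≤ u x) : cap E A ≤ Dnorm E u :=
  sInf_le ⟨u, ⟨U, hU, hAU, hu⟩, rfl⟩

lemma le_add_cap {O : Set α} {a c : ℝ≥0∞}
    (h : ∀ (u : Lp ℝ 2 μ) (U : Set α), IsOpen U → O ⊆ U → (∀ᵐ x ∂μ, x ∈ U → 1 ≤ u x) →
      a ≤ c + Dnorm E u) :
    a ≤ c + cap E O := by
  rw [cap, sInf_image]
  simp only [ENNReal.add_iInf, le_iInf_iff]
  rintro u ⟨U, hU, hOU, hu⟩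
  exact h u U hU hOU hu

lemma one_le_inv_mul_abs_add_abs {l a b : ℝ} (hl : 0 < l) (h : l < |a| ∨ 1 ≤ b) :
    1 ≤ l⁻¹ * |a| + |b| := by
  rcases h with ha | hb
  · have : 1 ≤ l⁻¹ * |a| := by rw [inv_mul_eq_div, one_le_div hl]; exact ha.le
    linarith [abs_nonneg b]
  · linarith [le_abs_self b, mul_nonneg (inv_nonneg.mpr hl.le) (abs_nonneg a)]

lemma cap_abs_gt_le_add_cap (hconv : IsConvexFunctional E)
    (hlat : ∀ u v : Lp ℝ 2 μ, E (u ⊓ v) + E (u ⊔ v) ≤ E u + E v)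
    (hneg : ∀ u : Lp ℝ 2 μ, E (-u) = E u) {F : Lp ℝ 2 μ} {f : α → ℝ}
    (hrep : ∀ᵐ x ∂μ, F x = f x) {O : Set α} (hf : ContinuousOn f Oᶜ) {l : ℝ} (hl : 0 < l) :
    cap E {x : α | l < |f x|} ≤ (ENNReal.ofReal l)⁻¹ * Dnorm E F + cap E O := by
  obtain ⟨W, hW, hWO⟩ := continuousOn_iff'.mp hf {y : ℝ | l < |y|}
    (isOpen_lt continuous_const continuous_abs)
  have hsub : {x : α | l < |f x|} ⊆ W ∪ O := fun x hx => by
    by_cases hxO : x ∈ O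
    · exact .inr hxO
    · exact .inl ((Set.ext_iff.mp hWO x).mp ⟨hx, hxO⟩).1
  refine le_add_cap fun u U hU hOU hu => ?_
  have htest : ∀ᵐ x ∂μ, x ∈ W ∪ U → 1 ≤ (l⁻¹ • |F| + |u|) x := by
    filter_upwards [hu, hrep, Lp.coeFn_add (l⁻¹ • |F|) |u|, Lp.coeFn_smul l⁻¹ |F|,
      Lp.coeFn_abs F, Lp.coeFn_abs u] with x hux hFx hadd hsmul habsF habsu hx
    simp only [hadd, Pi.add_apply, hsmul, Pi.smul_apply, habsF, habsu, smul_eq_mul, hFx]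
    refine one_le_inv_mul_abs_add_abs hl ?_
    by_cases hxU : x ∈ U
    · exact .inr (hux hxU)
    · have hxW : x ∈ W ∩ Oᶜ := ⟨hx.resolve_right hxU, fun hxO => hxU (hOU hxO)⟩
      exact .inl ((Set.ext_iff.mp hWO x).mpr hxW).1
  calc cap E {x : α | l < |f x|}
      ≤ Dnorm E (l⁻¹ • |F| + |u|) :=
        cap_le_Dnorm (hW.union hU) (hsub.trans (Set.union_subset_union_right W hOU)) htest
    _ ≤ Dnorm E (l⁻¹ • |F|) + Dnorm E |u| := Dnorm_add_le hconv _ _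
    _ ≤ ENNReal.ofReal l⁻¹ * Dnorm E |F| + Dnorm E |u| :=
        add_le_add (Dnorm_smul_le (inv_pos.mpr hl) _) le_rfl
    _ ≤ ENNReal.ofReal l⁻¹ * Dnorm E F + Dnorm E u :=
        add_le_add (by gcongr; exact Dnorm_abs_le hlat hneg F) (Dnorm_abs_le hlat hneg u)
    _ = (ENNReal.ofReal l)⁻¹ * Dnorm E F + Dnorm E u := by rw [ENNReal.ofReal_inv_of_pos hl]

end Capacity

end

theorem cap_chebyshev_general
    (E : Lp ℝ 2 m → ℝ≥0∞) (hE : IsDirichletForm E) (hsym : IsSymmetricFunctional E)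
    (F : Lp ℝ 2 m)
    (f : X → ℝ) (hqc : Quasicontinuous E f) (hrep : ∀ᵐ x ∂m, F x = f x)
    (l : ℝ) (hl : 0 < l) :
    cap E {x : X | l < |f x|} ≤ (ENNReal.ofReal l)⁻¹ * Dnorm E F := by
  refine ENNReal.le_of_forall_pos_le_add fun ε hε _ => ?_
  obtain ⟨O, -, hcapO, hcont⟩ := hqc ε hε
  calc cap E {x : X | l < |f x|}
      ≤ (ENNReal.ofReal l)⁻¹ * Dnorm E F + cap E O :=
        cap_abs_gt_le_add_cap hE.1 hE.2.2.2.1 hsym.2 hrep hcont hl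
    _ ≤ (ENNReal.ofReal l)⁻¹ * Dnorm E F + ε := by
        gcongr
        simpa using hcapO

/-- Chebyshev-type inequality for the capacity: if `f ∈ 𝔇` has a quasicontinuous
representative (again denoted `f`), then `cap {|f| > λ} ≤ λ⁻¹ ‖f‖_𝔇`. -/
theorem cap_chebyshev
    (hsupp : ∀ U : Set X, IsOpen U → U.Nonempty → 0 < m U)
    (E : Lp ℝ 2 m → ℝ≥0∞) (hE : IsDirichletForm E) (hsym : IsSymmetricFunctional E)
    (F : Lp ℝ 2 m) (hF : F ∈ Dspace E)
    (f : X → ℝ) (hqc : Quasicontinuous E f) (hrep : ∀ᵐ x ∂m, F x = f x)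
    (l : ℝ) (hl : 0 < l) :
    cap E {x : X | l < |f x|} ≤ (ENNReal.ofReal l)⁻¹ * Dnorm E F :=
  cap_chebyshev_general E hE hsym F f hqc hrep l hl

end
end
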